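/- arXiv:1210.6168 — 2 statements merged into one kernel-verified Lean document; each statement's English description precedes it below -/
import Mathlib

section
/- Define mmse : [0,∞) → ℝ by mmse(s) = 1 − ∫_ℝ tanh(s + √s·z) · (2π)^{−1/2} e^{−z²/2} dz. Then mmse is nonincreasing: for all 0 ≤ s ≤ t, mmse(t) ≤ mmse(s). -/
/-!
Writing `N_v` for the Gaussian law with mean and variance `v`, we have `mmse v = 1 - ∫ tanh ∂N_v`
and `N_t = N_s ∗ N_{t-s}`, so it suffices that `tanh x ≤ ∫ tanh (x + y) ∂N_u(y)` for all `x`.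
The density of `N_u` satisfies `p(-y) = e^{-2y} p(y)`, so that integral also equals
`∫ e^{-2y} tanh (x - y) ∂N_u(y)`, while `∫ e^{-2y} ∂N_u = 1`. Averaging the two expressions
reduces the claim to the pointwise inequality
`(1 + e^{-2y}) tanh x ≤ tanh (x + y) + e^{-2y} tanh (x - y)`.
-/

/-- The minimum mean-squared error of the BPSK-input real AWGN channel with
signal-to-noise ratio `s`:
`mmse(s) = 1 − ∫ tanh(s + √s·z) · (2π)^{−1/2} e^{−z²/2} dz`. -/
noncomputable def mmse (s : ℝ) : ℝ :=
  1 - ∫ z : ℝ,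
    Real.tanh (s + Real.sqrt s * z) * ((Real.sqrt (2 * Real.pi))⁻¹ * Real.exp (-z ^ 2 / 2))

open Real MeasureTheory ProbabilityTheory
open scoped NNReal

@[fun_prop]
lemma Real.continuous_tanh : Continuous tanh := by
  simp_rw [funext tanh_eq_sinh_div_cosh]
  exact continuous_sinh.div continuous_cosh fun x => (cosh_pos x).ne'

lemma one_add_exp_mul_tanh_le (x y : ℝ) :
    (1 + exp (-2 * y)) * tanh x ≤ tanh (x + y) + exp (-2 * y) * tanh (x - y) := by
  rw [show -2 * y = -y + -y by ring]
  simp only [tanh_eq, exp_add, exp_sub, exp_neg]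
  field_simp
  rw [← sub_nonneg]
  convert (by positivity : 0 ≤ 2 * exp x ^ 2 * (exp y ^ 2 - 1) ^ 2 * (exp y ^ 2 + 1)) using 1
  ring

lemma integral_le_integral_conv {M : Type*} [AddMonoid M] [MeasurableSpace M] [MeasurableAdd₂ M]
    {μ ν : Measure M} [IsProbabilityMeasure μ] [IsProbabilityMeasure ν] {f : M → ℝ} {C : ℝ}
    (hf : Measurable f) (hC : ∀ x, ‖f x‖ ≤ C) (h : ∀ x, f x ≤ ∫ y, f (x + y) ∂ν) :
    ∫ x, f x ∂μ ≤ ∫ x, f x ∂(μ ∗ ν) := by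
  rw [integral_conv (.of_bound hf.aestronglyMeasurable C (ae_of_all _ hC))]
  refine integral_mono (.of_bound hf.aestronglyMeasurable C (ae_of_all _ hC))
    (.of_bound ?_ C (ae_of_all _ fun x => ?_)) h
  · exact (hf.comp measurable_add).stronglyMeasurable.integral_prod_right'.aestronglyMeasurable
  · simpa using norm_integral_le_of_norm_le_const (μ := ν) (ae_of_all _ fun y => hC (x + y))

lemma gaussianPDFReal_neg (μ : ℝ) (v : ℝ≥0) (y : ℝ) :
    gaussianPDFReal μ v (-y) = exp (-2 * μ * y / v) * gaussianPDFReal μ v y := by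
  rcases eq_or_ne v 0 with rfl | hv
  · simp
  rw [gaussianPDFReal, gaussianPDFReal, mul_left_comm, ← exp_add]
  congr 2
  field_simp
  ring

lemma integral_comp_neg_gaussianReal_self (v : ℝ≥0) (f : ℝ → ℝ) :
    ∫ y, f (-y) ∂gaussianReal v v = ∫ y, exp (-2 * y) * f y ∂gaussianReal v v := by
  rcases eq_or_ne v 0 with rfl | hv
  · simp [gaussianReal_zero_var]
  simp only [integral_gaussianReal_eq_integral_smul hv, smul_eq_mul]
  rw [← integral_neg_eq_self]
  congr 1 with y
  have h_exponent : -2 * (v : ℝ) * y / v = -2 * y := by field_simp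
  rw [neg_neg, gaussianPDFReal_neg, h_exponent]
  ring

lemma tanh_le_integral_tanh_add_gaussianReal (x : ℝ) (v : ℝ≥0) :
    tanh x ≤ ∫ y, tanh (x + y) ∂gaussianReal v v := by
  set N := gaussianReal v v
  have h_bdd : ∀ y, ‖tanh y‖ ≤ 1 := fun y => (abs_tanh_lt_one y).le
  have h_int_exp : Integrable (fun y => exp (-2 * y)) N := integrable_exp_mul_gaussianReal _
  have h_int : Integrable (fun y => tanh (x + y)) N :=
    .of_bound (by fun_prop) 1 (ae_of_all _ fun y => h_bdd _)
  have h_int_refl : Integrable (fun y => exp (-2 * y) * tanh (x - y)) N :=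
    h_int_exp.mul_bdd (by fun_prop) (ae_of_all _ fun y => h_bdd _)
  have h_mass : ∫ y, exp (-2 * y) ∂N = 1 := by
    simpa using (integral_comp_neg_gaussianReal_self v fun _ => (1 : ℝ)).symm
  have h_refl : ∫ y, tanh (x + y) ∂N = ∫ y, exp (-2 * y) * tanh (x - y) ∂N := by
    simpa [sub_eq_add_neg] using integral_comp_neg_gaussianReal_self v fun y => tanh (x - y)
  have h_double : 2 * tanh x ≤ 2 * ∫ y, tanh (x + y) ∂N := calc
    2 * tanh x = ∫ y, (1 + exp (-2 * y)) * tanh x ∂N := by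
      rw [integral_mul_const, integral_add (integrable_const 1) h_int_exp, h_mass, integral_const,
        probReal_univ, smul_eq_mul, mul_one]
      ring
    _ ≤ ∫ y, (tanh (x + y) + exp (-2 * y) * tanh (x - y)) ∂N :=
      integral_mono (((integrable_const 1).add h_int_exp).mul_const _) (h_int.add h_int_refl)
        fun y => one_add_exp_mul_tanh_le x y
    _ = 2 * ∫ y, tanh (x + y) ∂N := by rw [integral_add h_int h_int_refl, ← h_refl]; ring
  linarith

lemma mmse_eq_one_sub_integral_gaussianReal (v : ℝ≥0) :
    mmse v = 1 - ∫ x, tanh x ∂gaussianReal v v := by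
  have h_map : (gaussianReal 0 1).map (fun z => (v : ℝ) + √v * z) = gaussianReal v v := by
    have h_comp : (fun z => (v : ℝ) + √v * z) = (· + (v : ℝ)) ∘ (√v * ·) := by ext; simp [add_comm]
    rw [h_comp, ← Measure.map_map (by fun_prop) (by fun_prop), gaussianReal_map_const_mul,
      gaussianReal_map_add_const]
    congr 1
    · simp
    · ext; simp
  rw [mmse, ← h_map, integral_map (by fun_prop) continuous_tanh.aestronglyMeasurable,
    integral_gaussianReal_eq_integral_smul one_ne_zero]
  congr 2 with z
  simp [gaussianPDFReal, mul_comm]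

/-- **The BPSK MMSE is nonincreasing on `[0,∞)`.** -/
theorem mmse_antitone (s t : ℝ) (hs : 0 ≤ s) (hst : s ≤ t) : mmse t ≤ mmse s := by
  lift s to ℝ≥0 using hs
  obtain ⟨u, rfl⟩ : ∃ u : ℝ≥0, t = s + u :=
    ⟨(t - s).toNNReal, by rw [Real.coe_toNNReal _ (sub_nonneg.2 hst)]; ring⟩
  rw [← NNReal.coe_add, mmse_eq_one_sub_integral_gaussianReal,
    mmse_eq_one_sub_integral_gaussianReal, sub_le_sub_iff_left, NNReal.coe_add,
    ← gaussianReal_conv_gaussianReal]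
  exact integral_le_integral_conv continuous_tanh.measurable (fun x => (abs_tanh_lt_one x).le)
    fun x => tanh_le_integral_tanh_add_gaussianReal x u
end

section
/- Let L ≥ 1, let B ∈ ℝ^{L×L} satisfy ∑_{l=0}^{L−1} b_{l,m}² = 1 for every m, let α_l ≥ 0 for all l, and let σ² > 0. Define the density-evolution sequences by sir_m(0) = 0 for all m, and for i ≥ 1: σ_l²(i) = σ² + α_l ∑_{m=0}^{L−1} b_{l,m}²·mmse(sir_m(i−1)) and sir_m(i) = ∑_{l=0}^{L−1} b_{l,m}²/σ_l²(i), where mmse(s) = 1 − ∫_ℝ tanh(s + √s·z)·(2π)^{−1/2} e^{−z²/2} dz. Then for every m the limit sir_m* = lim_{i→∞} sir_m(i) exists in [0, 1/σ²], and the limits satisfy the fixed-point equations sir_m* = ∑_l b_{l,m}² / ( σ² + α_l ∑_{m'} b_{l,m'}²·mmse(sir_{m'}*) ) for all m. -/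
open Filter

/-!
Since `mmse` is nonincreasing, one step of density evolution is monotone on nonnegative SIR
vectors. Starting from `0`, the iterates therefore increase; they are bounded by `1/σ²`, so they
converge to their supremum, which is a fixed point by continuity.

That `mmse` is nonincreasing: with `u = √s` and `T = tanh (u² + u Z)`, `Z` standard Gaussian,
`mmse s = 1 - 𝔼 T`, and `d/du 𝔼 T = 𝔼 [(1 - T²)(2u + Z)]`. Stein's lemma `𝔼 [Z h Z] = 𝔼 [h' Z]`
turns this into `2u 𝔼 [(1 - T²)(1 - T)] ≥ 0`.
-/

open MeasureTheory ProbabilityTheory Real Topology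

namespace Real

theorem hasDerivAt_tanh (x : ℝ) : HasDerivAt tanh (1 - tanh x ^ 2) x := by
  have h := (hasDerivAt_sinh x).div (hasDerivAt_cosh x) (cosh_pos x).ne'
  rw [show tanh = sinh / cosh from funext tanh_eq_sinh_div_cosh]
  refine h.congr_deriv ?_
  rw [Pi.div_apply]
  field_simp

@[fun_prop]
theorem continuous_tanh_s12 : Continuous tanh :=
  continuous_iff_continuousAt.2 fun x => (hasDerivAt_tanh x).continuousAt

theorem abs_one_sub_tanh_sq_le_one (x : ℝ) : |1 - tanh x ^ 2| ≤ 1 := by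
  rw [abs_le]
  constructor <;> nlinarith [tanh_sq_lt_one x, sq_nonneg (tanh x)]

end Real

theorem gaussianPDFReal_zero_one (z : ℝ) :
    gaussianPDFReal 0 1 z = (√(2 * π))⁻¹ * exp (-z ^ 2 / 2) := by
  simp [gaussianPDFReal]

theorem hasDerivAt_gaussianPDFReal_zero_one (z : ℝ) :
    HasDerivAt (gaussianPDFReal 0 1) (-z * gaussianPDFReal 0 1 z) z := by
  have h : HasDerivAt (fun y : ℝ => -y ^ 2 / 2) (-z) z :=
    ((hasDerivAt_pow 2 z).neg.div_const 2).congr_deriv (by push_cast; ring)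
  rw [show gaussianPDFReal 0 1 = fun z => (√(2 * π))⁻¹ * exp (-z ^ 2 / 2) from
    funext gaussianPDFReal_zero_one]
  exact (h.exp.const_mul _).congr_deriv (by ring)

theorem mmse_eq_one_sub_integral (s : ℝ) :
    mmse s = 1 - ∫ z, tanh (s + √s * z) * gaussianPDFReal 0 1 z := by
  simp only [mmse, gaussianPDFReal_zero_one]

theorem integrable_mul_gaussianPDFReal_of_abs_le {f : ℝ → ℝ} {C : ℝ}
    (hf : AEStronglyMeasurable f) (hC : ∀ z, |f z| ≤ C) :
    Integrable (fun z => f z * gaussianPDFReal 0 1 z) :=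
  (integrable_gaussianPDFReal 0 1).bdd_mul hf (Eventually.of_forall hC)

theorem integrable_id_mul_gaussianPDFReal : Integrable (fun z => z * gaussianPDFReal 0 1 z) := by
  refine ((integrable_mul_exp_neg_mul_sq (b := 1 / 2) (by norm_num)).const_mul
    (√(2 * π))⁻¹).congr (Eventually.of_forall fun z => ?_)
  simp only [gaussianPDFReal_zero_one]
  ring_nf

/-- Stein's lemma for the standard Gaussian. -/
theorem integral_mul_mul_gaussianPDFReal_eq_integral_deriv {h h' : ℝ → ℝ} {C : ℝ}
    (hh : ∀ z, HasDerivAt h (h' z) z) (hC : ∀ z, |h z| ≤ C)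
    (hh' : Integrable (fun z => h' z * gaussianPDFReal 0 1 z)) :
    ∫ z, z * h z * gaussianPDFReal 0 1 z = ∫ z, h' z * gaussianPDFReal 0 1 z := by
  have hmeas : AEStronglyMeasurable h :=
    (continuous_iff_continuousAt.2 fun z => (hh z).continuousAt).aestronglyMeasurable
  have hibp := integral_mul_deriv_eq_deriv_mul_of_integrable (u := h)
    (v' := fun z => -z * gaussianPDFReal 0 1 z)
    (fun z _ => hh z) (fun z _ => hasDerivAt_gaussianPDFReal_zero_one z)
    ((integrable_id_mul_gaussianPDFReal.bdd_mul hmeas (Eventually.of_forall hC)).neg.congr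
      (Eventually.of_forall fun z => by simp only [Pi.neg_apply, Pi.mul_apply]; ring)) hh'
    (integrable_mul_gaussianPDFReal_of_abs_le hmeas hC)
  calc ∫ z, z * h z * gaussianPDFReal 0 1 z = -∫ z, h z * (-z * gaussianPDFReal 0 1 z) := by
        rw [← integral_neg]; congr 1 with z; ring
    _ = _ := by rw [hibp, neg_neg]

@[fun_prop]
theorem continuous_mmse : Continuous mmse := by
  rw [show mmse = fun s => 1 - ∫ z, tanh (s + √s * z) * gaussianPDFReal 0 1 z from
    funext mmse_eq_one_sub_integral]
  refine continuous_const.sub (continuous_of_dominated (bound := gaussianPDFReal 0 1)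
    (fun s => by fun_prop) (fun s => Eventually.of_forall fun z => ?_)
    (integrable_gaussianPDFReal 0 1) (Eventually.of_forall fun z => by fun_prop))
  rw [norm_mul, Real.norm_of_nonneg (gaussianPDFReal_nonneg 0 1 z)]
  exact mul_le_of_le_one_left (gaussianPDFReal_nonneg 0 1 z) (abs_tanh_lt_one _).le

/-- Parametrised by `u = √s`, the integrand of `mmse` is smooth in the parameter, also at `0`. -/
noncomputable def meanTanh (u : ℝ) : ℝ := ∫ z, tanh (u ^ 2 + u * z) * gaussianPDFReal 0 1 z

theorem mmse_eq_one_sub_meanTanh {s : ℝ} (hs : 0 ≤ s) : mmse s = 1 - meanTanh (√s) := by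
  rw [mmse_eq_one_sub_integral, meanTanh, sq_sqrt hs]

theorem hasDerivAt_meanTanh (u : ℝ) :
    HasDerivAt meanTanh
      (∫ z, (1 - tanh (u ^ 2 + u * z) ^ 2) * (2 * u + z) * gaussianPDFReal 0 1 z) u := by
  have hbound : Integrable fun z => (2 * (|u| + 1) + |z|) * gaussianPDFReal 0 1 z := by
    refine ((integrable_gaussianPDFReal 0 1).const_mul (2 * (|u| + 1))).add
      integrable_id_mul_gaussianPDFReal.abs |>.congr (Eventually.of_forall fun z => ?_)
    simp only [Pi.add_apply, abs_mul, abs_of_nonneg (gaussianPDFReal_nonneg 0 1 z)]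
    ring
  refine (hasDerivAt_integral_of_dominated_loc_of_deriv_le
    (F := fun v z => tanh (v ^ 2 + v * z) * gaussianPDFReal 0 1 z)
    (F' := fun v z => (1 - tanh (v ^ 2 + v * z) ^ 2) * (2 * v + z) * gaussianPDFReal 0 1 z)
    (Metric.ball_mem_nhds u one_pos)
    (Eventually.of_forall fun v => by fun_prop)
    (integrable_mul_gaussianPDFReal_of_abs_le (by fun_prop) fun z => (abs_tanh_lt_one _).le)
    (by fun_prop) (Eventually.of_forall fun z v hv => ?_) hbound
    (Eventually.of_forall fun z v _ => ?_)).2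
  · have hv : |v| ≤ |u| + 1 := by
      have := abs_sub_abs_le_abs_sub v u
      rw [Metric.mem_ball, Real.dist_eq] at hv
      linarith
    rw [norm_mul, norm_mul, Real.norm_of_nonneg (gaussianPDFReal_nonneg 0 1 z)]
    refine mul_le_mul_of_nonneg_right ?_ (gaussianPDFReal_nonneg 0 1 z)
    calc ‖1 - tanh (v ^ 2 + v * z) ^ 2‖ * ‖2 * v + z‖ ≤ 1 * (2 * |v| + |z|) := by
          refine mul_le_mul (abs_one_sub_tanh_sq_le_one _) ?_ (norm_nonneg _) zero_le_one
          exact (abs_add_le _ _).trans (by rw [abs_mul, abs_two])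
      _ ≤ 2 * (|u| + 1) + |z| := by linarith
  · have hinner : HasDerivAt (fun v => v ^ 2 + v * z) (2 * v + z) v :=
      ((hasDerivAt_pow 2 v).fun_add ((hasDerivAt_id' v).mul_const z)).congr_deriv
        (by push_cast; ring)
    exact ((hasDerivAt_tanh _).comp v hinner).mul_const _

theorem integral_deriv_meanTanh_eq (u : ℝ) :
    ∫ z, (1 - tanh (u ^ 2 + u * z) ^ 2) * (2 * u + z) * gaussianPDFReal 0 1 z =
      2 * u * ∫ z, (1 - tanh (u ^ 2 + u * z) ^ 2) * (1 - tanh (u ^ 2 + u * z)) *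
        gaussianPDFReal 0 1 z := by
  set T : ℝ → ℝ := fun z => tanh (u ^ 2 + u * z)
  set h : ℝ → ℝ := fun z => 1 - T z ^ 2
  set h' : ℝ → ℝ := fun z => -(2 * T z * h z * u)
  have hT : ∀ z, |T z| ≤ 1 := fun z => (abs_tanh_lt_one _).le
  have hh : ∀ z, |h z| ≤ 1 := fun z => abs_one_sub_tanh_sq_le_one _
  have hderiv : ∀ z, HasDerivAt h (h' z) z := by
    intro z
    have hinner : HasDerivAt (fun z => u ^ 2 + u * z) u z := by
      simpa using ((hasDerivAt_id z).const_mul u).const_add (u ^ 2)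
    exact (((hasDerivAt_tanh _).comp z hinner).pow 2).const_sub 1 |>.congr_deriv (by
      simp only [h, h', T, Function.comp_apply]; push_cast; ring)
  have hh'_int : Integrable fun z => h' z * gaussianPDFReal 0 1 z :=
    integrable_mul_gaussianPDFReal_of_abs_le (C := 2 * |u|) (by fun_prop) fun z => by
      simp only [h', abs_neg, abs_mul, abs_two]
      nlinarith [mul_le_mul (hT z) (hh z) (abs_nonneg _) zero_le_one, abs_nonneg u]
  have hzh_int : Integrable fun z => z * h z * gaussianPDFReal 0 1 z :=
    (integrable_id_mul_gaussianPDFReal.bdd_mul (c := 1) (by fun_prop)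
      (Eventually.of_forall hh)).congr (Eventually.of_forall fun z => by ring)
  have hhT_int : Integrable fun z => h z * (1 - T z) * gaussianPDFReal 0 1 z :=
    integrable_mul_gaussianPDFReal_of_abs_le (f := fun z => h z * (1 - T z)) (C := 2)
      (by fun_prop) fun z => by
        have h1T : |1 - T z| ≤ 2 := (abs_sub _ _).trans (by linarith [abs_one (α := ℝ), hT z])
        simpa [abs_mul] using mul_le_mul (hh z) h1T (abs_nonneg _) zero_le_one
  have hstein := integral_mul_mul_gaussianPDFReal_eq_integral_deriv hderiv hh hh'_int
  calc ∫ z, h z * (2 * u + z) * gaussianPDFReal 0 1 z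
      = ∫ z, (2 * u * (h z * (1 - T z) * gaussianPDFReal 0 1 z) +
          (z * h z * gaussianPDFReal 0 1 z - h' z * gaussianPDFReal 0 1 z)) := by
        congr 1 with z; simp only [h']; ring
    _ = 2 * u * ∫ z, h z * (1 - T z) * gaussianPDFReal 0 1 z := by
        rw [integral_add (hhT_int.const_mul _) (by exact hzh_int.sub hh'_int),
          integral_sub hzh_int hh'_int, hstein, sub_self, add_zero, integral_const_mul]

theorem monotoneOn_meanTanh : MonotoneOn meanTanh (Set.Ici 0) := by
  refine monotoneOn_of_hasDerivWithinAt_nonneg (convex_Ici 0)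
    (fun u _ => (hasDerivAt_meanTanh u).continuousAt.continuousWithinAt)
    (fun u _ => (hasDerivAt_meanTanh u).hasDerivWithinAt) fun u hu => ?_
  rw [interior_Ici, Set.mem_Ioi] at hu
  rw [integral_deriv_meanTanh_eq]
  refine mul_nonneg (by positivity) (integral_nonneg fun z => ?_)
  have := tanh_sq_lt_one (u ^ 2 + u * z)
  have := tanh_lt_one (u ^ 2 + u * z)
  exact mul_nonneg (mul_nonneg (by linarith) (by linarith)) (gaussianPDFReal_nonneg 0 1 z)

theorem antitoneOn_mmse : AntitoneOn mmse (Set.Ici 0) := fun a ha b hb hab => by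
  rw [mmse_eq_one_sub_meanTanh ha, mmse_eq_one_sub_meanTanh hb, sub_le_sub_iff_left]
  exact monotoneOn_meanTanh (sqrt_nonneg a) (sqrt_nonneg b) (sqrt_le_sqrt hab)

theorem mmse_nonneg (s : ℝ) : 0 ≤ mmse s := by
  rw [mmse_eq_one_sub_integral, sub_nonneg, ← integral_gaussianPDFReal_eq_one 0 one_ne_zero]
  refine integral_mono (integrable_mul_gaussianPDFReal_of_abs_le (by fun_prop)
    fun z => (abs_tanh_lt_one _).le) (integrable_gaussianPDFReal 0 1) fun z => ?_
  exact mul_le_of_le_one_left (gaussianPDFReal_nonneg 0 1 z) (tanh_lt_one _).le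

section Iteration

variable {α : Type*} {F : α → α} {x : ℕ → α}

theorem monotone_of_succ_eq_of_monotoneOn [Preorder α] {s : Set α} (hF : MonotoneOn F s)
    (hs : ∀ n, x n ∈ s) (hx : ∀ n, x (n + 1) = F (x n)) (h01 : x 0 ≤ x 1) : Monotone x := by
  refine monotone_nat_of_le_succ fun n => ?_
  induction n with
  | zero => exact h01
  | succ n ih => rw [hx n, hx (n + 1)]; exact hF (hs n) (hs (n + 1)) ih

theorem tendsto_ciSup_and_isFixedPt_of_succ_eq [TopologicalSpace α]
    [ConditionallyCompleteLattice α] [SupConvergenceClass α] [T2Space α] (hF : Continuous F)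
    (hx : ∀ n, x (n + 1) = F (x n)) (hmono : Monotone x) (hbdd : BddAbove (Set.range x)) :
    Tendsto x atTop (𝓝 (⨆ n, x n)) ∧ Function.IsFixedPt F (⨆ n, x n) := by
  have htend := tendsto_atTop_ciSup hmono hbdd
  have hshift : Tendsto (F ∘ x) atTop (𝓝 (⨆ n, x n)) := by
    simpa only [Function.comp_def, ← hx] using (tendsto_add_atTop_iff_nat 1).2 htend
  exact ⟨htend, tendsto_nhds_unique ((hF.tendsto _).comp htend) hshift⟩

end Iteration

section DensityEvolution

variable {ι κ : Type*} [Fintype ι] {B : κ → ι → ℝ} {α : κ → ℝ} {σ2 : ℝ}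

variable (B α σ2) in
/-- The noise variance `σ_l²(i + 1)` of the paper, as a function of `x = sir(i)`. -/
noncomputable def deNoise (x : ι → ℝ) (l : κ) : ℝ :=
  σ2 + α l * ∑ m, B l m ^ 2 * mmse (x m)

theorem le_deNoise (hα : ∀ l, 0 ≤ α l) (x : ι → ℝ) (l : κ) : σ2 ≤ deNoise B α σ2 x l :=
  le_add_of_nonneg_right <| mul_nonneg (hα l) <|
    Finset.sum_nonneg fun _ _ => mul_nonneg (sq_nonneg _) (mmse_nonneg _)

theorem deNoise_pos (hα : ∀ l, 0 ≤ α l) (hσ2 : 0 < σ2) (x : ι → ℝ) (l : κ) :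
    0 < deNoise B α σ2 x l :=
  hσ2.trans_le (le_deNoise hα x l)

theorem antitoneOn_deNoise (hα : ∀ l, 0 ≤ α l) (l : κ) :
    AntitoneOn (fun x => deNoise B α σ2 x l) (Set.Ici 0) := fun _ hx _ hy hxy =>
  add_le_add_right (mul_le_mul_of_nonneg_left (Finset.sum_le_sum fun m _ =>
    mul_le_mul_of_nonneg_left (antitoneOn_mmse (hx m) (hy m) (hxy m)) (sq_nonneg _)) (hα l)) _

variable [Fintype κ]

variable (B α σ2) in
/-- `sir(i + 1) = deMap B α σ2 (sir i)`. -/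
noncomputable def deMap (x : ι → ℝ) (m : ι) : ℝ :=
  ∑ l, B l m ^ 2 / deNoise B α σ2 x l

theorem deMap_nonneg (hα : ∀ l, 0 ≤ α l) (hσ2 : 0 < σ2) (x : ι → ℝ) : 0 ≤ deMap B α σ2 x :=
  fun _ => Finset.sum_nonneg fun l _ => div_nonneg (sq_nonneg _) (deNoise_pos hα hσ2 x l).le

theorem deMap_le (hB : ∀ m, ∑ l, B l m ^ 2 = 1) (hα : ∀ l, 0 ≤ α l) (hσ2 : 0 < σ2)
    (x : ι → ℝ) (m : ι) : deMap B α σ2 x m ≤ 1 / σ2 :=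
  calc deMap B α σ2 x m ≤ ∑ l, B l m ^ 2 / σ2 :=
        Finset.sum_le_sum fun l _ =>
          div_le_div_of_nonneg_left (sq_nonneg _) hσ2 (le_deNoise hα x l)
    _ = 1 / σ2 := by rw [← Finset.sum_div, hB m]

theorem monotoneOn_deMap (hα : ∀ l, 0 ≤ α l) (hσ2 : 0 < σ2) :
    MonotoneOn (deMap B α σ2) (Set.Ici 0) := fun _ hx y hy hxy _ =>
  Finset.sum_le_sum fun l _ => div_le_div_of_nonneg_left (sq_nonneg _) (deNoise_pos hα hσ2 y l)
    (antitoneOn_deNoise hα l hx hy hxy)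

theorem continuous_deMap (hα : ∀ l, 0 ≤ α l) (hσ2 : 0 < σ2) : Continuous (deMap B α σ2) :=
  continuous_pi fun m => continuous_finsetSum _ fun l _ =>
    continuous_const.div (by unfold deNoise; fun_prop) fun x => (deNoise_pos hα hσ2 x l).ne'

end DensityEvolution

theorem de_tendsto_fixed_point_general (L : ℕ) (B : Fin L → Fin L → ℝ)
    (hB : ∀ m : Fin L, ∑ l : Fin L, (B l m) ^ 2 = 1)
    (α : Fin L → ℝ) (hα : ∀ l, 0 ≤ α l) (σ2 : ℝ) (hσ2 : 0 < σ2)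
    (sir : ℕ → Fin L → ℝ) (sigma2 : ℕ → Fin L → ℝ)
    (hsir0 : ∀ m, sir 0 m = 0)
    (hsigma2 : ∀ i l,
      sigma2 (i + 1) l = σ2 + α l * ∑ m : Fin L, (B l m) ^ 2 * mmse (sir i m))
    (hsir : ∀ i m, sir (i + 1) m = ∑ l : Fin L, (B l m) ^ 2 / sigma2 (i + 1) l) :
    ∃ sirStar : Fin L → ℝ,
      (∀ m, sirStar m ∈ Set.Icc (0 : ℝ) (1 / σ2)) ∧
      (∀ m, Tendsto (fun i : ℕ => sir i m) atTop (nhds (sirStar m))) ∧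
      (∀ m, sirStar m =
        ∑ l : Fin L,
          (B l m) ^ 2 /
            (σ2 + α l * ∑ m' : Fin L, (B l m') ^ 2 * mmse (sirStar m'))) := by
  have hstep : ∀ i, sir (i + 1) = deMap B α σ2 (sir i) := fun i => funext fun m => by
    simp only [hsir, hsigma2, deMap, deNoise]
  have hnonneg : ∀ i, 0 ≤ sir i
    | 0 => fun m => (hsir0 m).ge
    | i + 1 => hstep i ▸ deMap_nonneg hα hσ2 _
  have hle : ∀ i m, sir i m ≤ 1 / σ2
    | 0, m => by rw [hsir0]; positivity
    | i + 1, m => hstep i ▸ deMap_le hB hα hσ2 _ m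
  have hmono : Monotone sir := monotone_of_succ_eq_of_monotoneOn (monotoneOn_deMap hα hσ2)
    hnonneg hstep fun m => (hsir0 m).trans_le (hnonneg 1 m)
  obtain ⟨htend, hfix⟩ := tendsto_ciSup_and_isFixedPt_of_succ_eq (continuous_deMap hα hσ2)
    hstep hmono ⟨_, Set.forall_mem_range.2 fun i m => hle i m⟩
  refine ⟨⨆ i, sir i, fun m => ?_, tendsto_pi_nhds.1 htend, fun m => (congrFun hfix m).symm⟩
  exact isClosed_Icc.mem_of_tendsto (tendsto_pi_nhds.1 htend m)
    (Eventually.of_forall fun i => ⟨hnonneg i m, hle i m⟩)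

/-- **Convergence of density evolution to a fixed point.**
For the coupled DE recursion `sir_m(0) = 0`,
`σ_l²(i) = σ² + α_l ∑_m b_{l,m}²·mmse(sir_m(i−1))`,
`sir_m(i) = ∑_l b_{l,m}²/σ_l²(i)`, with unit column square-sums, `α_l ≥ 0`, and
`σ² > 0`, each `sir_m(i)` converges as `i → ∞` to a limit `sir_m* ∈ [0, 1/σ²]`, and the
limits satisfy the fixed-point equations
`sir_m* = ∑_l b_{l,m}²/(σ² + α_l ∑_{m'} b_{l,m'}²·mmse(sir_{m'}*))`. -/
theorem de_tendsto_fixed_point (L : ℕ) (hL : 1 ≤ L) (B : Fin L → Fin L → ℝ)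
    (hB : ∀ m : Fin L, ∑ l : Fin L, (B l m) ^ 2 = 1)
    (α : Fin L → ℝ) (hα : ∀ l, 0 ≤ α l) (σ2 : ℝ) (hσ2 : 0 < σ2)
    (sir : ℕ → Fin L → ℝ) (sigma2 : ℕ → Fin L → ℝ)
    (hsir0 : ∀ m, sir 0 m = 0)
    (hsigma2 : ∀ i l,
      sigma2 (i + 1) l = σ2 + α l * ∑ m : Fin L, (B l m) ^ 2 * mmse (sir i m))
    (hsir : ∀ i m, sir (i + 1) m = ∑ l : Fin L, (B l m) ^ 2 / sigma2 (i + 1) l) :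
    ∃ sirStar : Fin L → ℝ,
      (∀ m, sirStar m ∈ Set.Icc (0 : ℝ) (1 / σ2)) ∧
      (∀ m, Tendsto (fun i : ℕ => sir i m) atTop (nhds (sirStar m))) ∧
      (∀ m, sirStar m =
        ∑ l : Fin L,
          (B l m) ^ 2 /
            (σ2 + α l * ∑ m' : Fin L, (B l m') ^ 2 * mmse (sirStar m'))) :=
  de_tendsto_fixed_point_general L B hB α hα σ2 hσ2 sir sigma2 hsir0 hsigma2 hsir
end
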